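/- Suppose g ∈ F⟨Z⟩ is homogeneous of degree d and there exist matrices A_1,...,A_n ∈ M_S(F) such that for every word m = z_{i_1}···z_{i_d} of length d, the coefficient g(m) equals the (1,S) entry of A_{i_1}A_{i_2}···A_{i_d}. Then for any homogeneous f ∈ F⟨Z⟩ of degree d and any scalars a_1,...,a_n ∈ F, the value (f∘g)(a_1,...,a_n) equals the (1,S) entry of f(a_1 A_1, a_2 A_2, ..., a_n A_n) evaluated in M_S(F). -/

import Mathlib

/-- Hadamard (coefficientwise) product on `F⟨Z⟩`. -/
noncomputable def hadamard {F : Type*} [CommRing F] {X : Type*}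
    (f g : MonoidAlgebra F (FreeMonoid X)) : MonoidAlgebra F (FreeMonoid X) :=
  MonoidAlgebra.ofCoeff (Finsupp.zipWith (· * ·) (mul_zero 0) f.coeff g.coeff)

/-- Scalar evaluation `F⟨Z⟩ → F`, substituting `a_i` for `z_i`. -/
noncomputable def evalScalar {F : Type*} [Field F] {n : ℕ} (a : Fin n → F) :
    MonoidAlgebra F (FreeMonoid (Fin n)) →ₐ[F] F :=
  MonoidAlgebra.lift F F (FreeMonoid (Fin n)) (FreeMonoid.lift a)

/-- Evaluation `F⟨Z⟩ → M_S(F)`, substituting the matrix `M_i` for `z_i`. -/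
noncomputable def evalMat {F : Type*} [Field F] {n S : ℕ}
    (M : Fin n → Matrix (Fin S) (Fin S) F) :
    MonoidAlgebra F (FreeMonoid (Fin n)) →ₐ[F] Matrix (Fin S) (Fin S) F :=
  MonoidAlgebra.lift F _ (FreeMonoid (Fin n)) (FreeMonoid.lift M)

/-!
Both sides are linear in `f`, so it suffices to compare them on a word `m` of length `d`. There
the left side is `f(m) g(m) a^m` and the right side is `f(m)` times the `(1,S)` entry of
`(a A)^m = a^m A^m`; the hypothesis on `g` says precisely that this entry of `A^m` is `g(m)`.
-/

theorem List.prod_map_smul {ι M N : Type*} [CommMonoid M] [Monoid N] [MulAction M N]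
    [IsScalarTower M N N] [SMulCommClass M N N] (b : ι → M) (v : ι → N) (l : List ι) :
    (l.map fun i => b i • v i).prod = (l.map b).prod • (l.map v).prod := by
  induction l with
  | nil => simp
  | cons i l ih => simp only [List.map_cons, List.prod_cons, ih, smul_mul_smul_comm]

theorem coeff_hadamard {R X : Type*} [CommRing R] (f g : MonoidAlgebra R (FreeMonoid X))
    (m : FreeMonoid X) : (hadamard f g).coeff m = f.coeff m * g.coeff m := by
  simp only [hadamard, MonoidAlgebra.coeff_ofCoeff, Finsupp.zipWith_apply]

section

variable {F : Type*} [Field F] {n : ℕ}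

theorem evalScalar_hadamard_eq_sum (a : Fin n → F) (f g : MonoidAlgebra F (FreeMonoid (Fin n))) :
    evalScalar a (hadamard f g) =
      ∑ m ∈ f.coeff.support, f.coeff m * g.coeff m * (m.toList.map a).prod := by
  have hsupp : (hadamard f g).coeff.support ⊆ f.coeff.support := fun m hm =>
    Finsupp.mem_support_iff.mpr fun h0 =>
      Finsupp.mem_support_iff.mp hm (by rw [coeff_hadamard, h0, zero_mul])
  rw [evalScalar, MonoidAlgebra.lift_apply, Finsupp.sum_of_support_subset _ hsupp
    (fun m c => c • FreeMonoid.lift a m) fun _ _ => zero_smul F _]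
  simp only [coeff_hadamard, FreeMonoid.lift_apply, smul_eq_mul]

theorem evalMat_apply {S : ℕ} (M : Fin n → Matrix (Fin S) (Fin S) F)
    (f : MonoidAlgebra F (FreeMonoid (Fin n))) (i j : Fin S) :
    evalMat M f i j = ∑ m ∈ f.coeff.support, f.coeff m * (m.toList.map M).prod i j := by
  simp only [evalMat, MonoidAlgebra.lift_apply, Finsupp.sum, Matrix.sum_apply,
    FreeMonoid.lift_apply, Matrix.smul_apply, smul_eq_mul]

end

/-- If the coefficients of the homogeneous degree-`d` polynomial `g` are given by the
`(1,S)` entries of products of the matrices `A_1,…,A_n`, then for any homogeneous `f`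
of degree `d` and scalars `a_1,…,a_n`, the value `(f∘g)(a_1,…,a_n)` equals the `(1,S)`
entry of `f(a_1 A_1, …, a_n A_n)`. -/
theorem evalScalar_hadamard {F : Type*} [Field F] {n S d : ℕ} (hS : 0 < S)
    (f g : MonoidAlgebra F (FreeMonoid (Fin n)))
    (hf : ∀ m ∈ Finsupp.support f.coeff, (FreeMonoid.toList m).length = d)
    (A : Fin n → Matrix (Fin S) (Fin S) F)
    (hg : ∀ m : FreeMonoid (Fin n), (FreeMonoid.toList m).length = d →
      g.coeff m = ((FreeMonoid.toList m).map A).prod ⟨0, hS⟩ ⟨S - 1, by omega⟩)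
    (a : Fin n → F) :
    evalScalar a (hadamard f g) =
      evalMat (fun i => a i • A i) f ⟨0, hS⟩ ⟨S - 1, by omega⟩ := by
  rw [evalScalar_hadamard_eq_sum, evalMat_apply]
  refine Finset.sum_congr rfl fun m hm => ?_
  rw [hg m (hf m hm), List.prod_map_smul, Matrix.smul_apply, smul_eq_mul]
  ring
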